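/- arXiv:1310.2524 — 6 statements merged into one kernel-verified Lean document; each statement's English description precedes it below -/
import Mathlib

section
/- Let H be a complex Hilbert space and let A and Q be bounded linear operators on H such that AQ = QA. Then for every natural number n ≥ 2, the operator inequality (((AQ)*)ⁿ(AQ)ⁿ)^{2/n} ≤ ‖A‖⁴ ((Q*)ⁿQⁿ)^{2/n} holds, where for a positive operator S and real exponent r > 0, S^r is defined via continuous functional calculus. -/
/-!
Since `A` and `Q` commute, `(AQ)ⁿ = AⁿQⁿ`, so `((AQ)ⁿ)* (AQ)ⁿ = (Qⁿ)* ((Aⁿ)* Aⁿ) Qⁿ`, and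
conjugating `(Aⁿ)* Aⁿ ≤ ‖A‖²ⁿ` by `Qⁿ` gives `((AQ)ⁿ)* (AQ)ⁿ ≤ ‖A‖²ⁿ (Qⁿ)* Qⁿ`. For `n ≥ 2` the
exponent `2/n` lies in `[0, 1]`, where `x ↦ x ^ (2/n)` is operator monotone (Löwner–Heinz), and
`(‖A‖²ⁿ S) ^ (2/n) = ‖A‖⁴ S ^ (2/n)`.
-/

open scoped NNReal

namespace CFC

variable {A : Type*} [NonUnitalCStarAlgebra A] [PartialOrder A] [StarOrderedRing A]

lemma nnrpow_smul_of_nonneg {c : ℝ} (hc : 0 ≤ c) {a : A} (ha : 0 ≤ a) (p : ℝ≥0) :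
    (c • a) ^ p = c ^ (p : ℝ) • a ^ p := by
  lift c to ℝ≥0 using hc
  rcases eq_zero_or_pos p with rfl | hp
  · simp
  have h0 : (0 : ℝ≥0).nnrpow p = 0 := NNReal.zero_rpow (by exact_mod_cast hp.ne')
  rw [← NNReal.coe_rpow, ← NNReal.smul_def, ← NNReal.smul_def, nnrpow_def, nnrpow_def]
  refine (cfcₙ_comp_smul c (fun x : ℝ≥0 => x.nnrpow p) a (by fun_prop) h0).symm.trans ?_
  refine .trans ?_ (cfcₙ_smul (c ^ (p : ℝ)) (fun x : ℝ≥0 => x.nnrpow p) a (by fun_prop) h0)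
  refine cfcₙ_congr fun x _ => ?_
  simp only [smul_eq_mul, NNReal.nnrpow, NNReal.mul_rpow]

end CFC

section

variable {A : Type*} [CStarAlgebra A] [PartialOrder A] [StarOrderedRing A]

lemma Commute.star_mul_self_pow_le {a q : A} (h : Commute a q) {n : ℕ} (hn : 0 < n) :
    star ((a * q) ^ n) * (a * q) ^ n ≤ ‖a‖ ^ (2 * n) • (star (q ^ n) * q ^ n) := by
  have hnorm : ‖star (a ^ n) * a ^ n‖ ≤ ‖a‖ ^ (2 * n) := by
    rw [CStarRing.norm_star_mul_self, ← sq, pow_mul']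
    gcongr
    exact norm_pow_le' a hn
  calc star ((a * q) ^ n) * (a * q) ^ n = star (q ^ n) * (star (a ^ n) * a ^ n) * q ^ n := by
        rw [h.mul_pow, star_mul]
        simp only [mul_assoc]
    _ ≤ ‖star (a ^ n) * a ^ n‖ • (star (q ^ n) * q ^ n) :=
        CStarAlgebra.star_left_conjugate_le_norm_smul (.star_mul_self _)
    _ ≤ ‖a‖ ^ (2 * n) • (star (q ^ n) * q ^ n) :=
        smul_le_smul_of_nonneg_right hnorm (star_mul_self_nonneg _)

lemma Commute.nnrpow_star_mul_self_pow_le {a q : A} (h : Commute a q) {n : ℕ} (hn : 2 ≤ n) :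
    (star ((a * q) ^ n) * (a * q) ^ n) ^ (2 / (n : ℝ≥0)) ≤
      ‖a‖ ^ 4 • (star (q ^ n) * q ^ n) ^ (2 / (n : ℝ≥0)) := by
  have hp : 2 / (n : ℝ≥0) ∈ Set.Icc 0 1 :=
    ⟨zero_le, div_le_one_of_le₀ (by exact_mod_cast hn) zero_le⟩
  have hscalar : (‖a‖ ^ (2 * n)) ^ ((2 / (n : ℝ≥0) : ℝ≥0) : ℝ) = ‖a‖ ^ 4 := by
    rw [← Real.rpow_natCast, ← Real.rpow_mul (norm_nonneg a), NNReal.coe_div]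
    push_cast
    rw [show (2 * n : ℝ) * (2 / n) = (4 : ℕ) by field_simp; norm_num, Real.rpow_natCast]
  calc (star ((a * q) ^ n) * (a * q) ^ n) ^ (2 / (n : ℝ≥0))
      ≤ (‖a‖ ^ (2 * n) • (star (q ^ n) * q ^ n)) ^ (2 / (n : ℝ≥0)) :=
        CFC.nnrpow_le_nnrpow hp (h.star_mul_self_pow_le (by omega))
    _ = ‖a‖ ^ 4 • (star (q ^ n) * q ^ n) ^ (2 / (n : ℝ≥0)) := by
        rw [CFC.nnrpow_smul_of_nonneg (by positivity) (star_mul_self_nonneg _), hscalar]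

end

/-- If `A` and `Q` are bounded operators on a complex Hilbert space with `AQ = QA`, then for
every `n ≥ 2`, `(((AQ)*)ⁿ(AQ)ⁿ)^{2/n} ≤ ‖A‖⁴ ((Q*)ⁿQⁿ)^{2/n}`, powers of positive operators
being taken via continuous functional calculus. -/
theorem stmt_5 {H : Type*} [NormedAddCommGroup H] [InnerProductSpace ℂ H] [CompleteSpace H]
    (A Q : H →L[ℂ] H) (hAQ : A * Q = Q * A) (n : ℕ) (hn : 2 ≤ n) :
    CFC.nnrpow ((ContinuousLinearMap.adjoint (A * Q)) ^ n * (A * Q) ^ n) (2 / (n : ℝ≥0)) ≤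
      (‖A‖ ^ 4) • CFC.nnrpow ((ContinuousLinearMap.adjoint Q) ^ n * Q ^ n) (2 / (n : ℝ≥0)) := by
  simpa only [← ContinuousLinearMap.star_eq_adjoint, star_pow, CFC.nnrpow_eq_pow] using
    Commute.nnrpow_star_mul_self_pow_le (hAQ : Commute A Q) hn
end

section
/- Let R be a unital ring in which every one-sided invertible element is invertible (i.e., for all a, b ∈ R, ab = 1 implies ba = 1). Let T ∈ R and let p ∈ R be an idempotent (p² = p) that is T-invariant, meaning Tp = pTp. Then T is invertible in R if and only if pTp has a two-sided inverse in the corner ring pRp with unit p (i.e., there exists x with x = pxp, x(pTp) = p = (pTp)x) and (1−p)T(1−p) has a two-sided inverse in the corner ring (1−p)R(1−p) with unit 1−p. Consequently, for a unital ℂ-algebra R with this property, the spectrum of T equals the union of the spectrum of pTp in pRp and the spectrum of (1−p)T(1−p) in (1−p)R(1−p). -/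
/-!
With respect to `1 = p + (1 - p)`, invariance `Tp = pTp` makes `T` upper triangular:
`(1 - p) T p = 0`. If `T` has inverse `S`, then `pSp` is a left inverse of `pTp` and
`(1 - p) S (1 - p)` a right inverse of `(1 - p) T (1 - p)`; Dedekind-finiteness passes to
corners (`xa = e` in `eRe` gives `(x + 1 - e)(a + 1 - e) = 1`), so these are two-sided.
Conversely, from corner inverses `x` of `pTp` and `y` of `(1 - p) T (1 - p)`, the
triangular formula `x + y - xTy` inverts `T`. Applying this to `T - λ` gives the spectrum.
-/


/-- The spectrum of an element `x` of the corner ring `eAe` (with unit `e`) of a unital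
`ℂ`-algebra `A`: the set of `λ ∈ ℂ` such that `x - λe` has no two-sided inverse in `eAe`. -/
def cornerSpectrum {A : Type*} [Ring A] [Algebra ℂ A] (e x : A) : Set ℂ :=
  {lam | ¬ ∃ y : A, y = e * y * e ∧ y * (x - lam • e) = e ∧ (x - lam • e) * y = e}

section Corner

open Subsemigroup

variable {R : Type*} [Ring R]

def IsCornerUnit (e x : R) : Prop :=
  ∃ y, y = e * y * e ∧ y * x = e ∧ x * y = e

namespace IsIdempotentElem

variable {e : R} (he : IsIdempotentElem e)
include he

theorem mul_eq_symm_of_mem_corner [IsDedekindFiniteMonoid R] {x a : R}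
    (hx : x ∈ corner e) (ha : a ∈ corner e) (h : x * a = e) : a * x = e := by
  obtain ⟨hex, hxe⟩ := (mem_corner_iff he).mp hx
  obtain ⟨hea, hae⟩ := (mem_corner_iff he).mp ha
  have hlift : (x + (1 - e)) * (a + (1 - e)) = 1 := by
    linear_combination (norm := noncomm_ring) h - hxe - hea + he.eq
  linear_combination (norm := noncomm_ring) mul_eq_one_symm hlift + hae + hex - he.eq

theorem isCornerUnit_of_mul_eq [IsDedekindFiniteMonoid R] {x a : R}
    (hx : x ∈ corner e) (ha : a ∈ corner e) (h : x * a = e) : IsCornerUnit e a := by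
  obtain ⟨hex, hxe⟩ := (mem_corner_iff he).mp hx
  exact ⟨x, by rw [hex, hxe], h, he.mul_eq_symm_of_mem_corner hx ha h⟩

theorem exists_inverse_of_isCornerUnit {x : R} (hx : IsCornerUnit e x) :
    ∃ y, e * y = y ∧ y * e = y ∧ y * x = e ∧ x * y = e := by
  obtain ⟨y, hy, hyx, hxy⟩ := hx
  obtain ⟨hey, hye⟩ := (mem_corner_iff he).mp ⟨y, hy.symm⟩
  exact ⟨y, hey, hye, hyx, hxy⟩

end IsIdempotentElem

section Triangular

variable {T p : R} (hp : IsIdempotentElem p) (hTp : T * p = p * T * p)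
include hp hTp

theorem corner_mul_corner_of_mul_eq_one {S : R} (hST : S * T = 1) :
    (p * S * p) * (p * T * p) = p := by
  linear_combination (norm := noncomm_ring)
    p * S * hp.eq * T * p - p * S * hTp + p * hST * p + hp.eq

theorem corner_one_sub_mul_corner_one_sub_of_mul_eq_one {S : R} (hTS : T * S = 1) :
    ((1 - p) * T * (1 - p)) * ((1 - p) * S * (1 - p)) = 1 - p := by
  have hq : IsIdempotentElem (1 - p) := hp.one_sub
  linear_combination (norm := noncomm_ring)
    (1 - p) * T * hq.eq * S * (1 - p) - hTp * S * (1 - p) + (1 - p) * hTS * (1 - p) + hq.eq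

theorem isUnit_of_isCornerUnit (h₁ : IsCornerUnit p (p * T * p))
    (h₂ : IsCornerUnit (1 - p) ((1 - p) * T * (1 - p))) : IsUnit T := by
  obtain ⟨x, hpx, hxp, hxa, hax⟩ := hp.exists_inverse_of_isCornerUnit h₁
  obtain ⟨y, hqy, hyq, hyd, hdy⟩ := hp.one_sub.exists_inverse_of_isCornerUnit h₂
  have hyp : y * p = 0 := by
    linear_combination (norm := noncomm_ring) -(hyq * p) - y * hp.eq
  have hTx : T * x = p := by
    linear_combination (norm := noncomm_ring) hax + hTp * x - T * hpx
  have hTy : (1 - p) * T * y = 1 - p := by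
    linear_combination (norm := noncomm_ring) hdy - (1 - p) * T * hqy
  have hyT : y * T = 1 - p := by
    linear_combination (norm := noncomm_ring) y * hTp + hyp * T * p + hyd - hyq * T * (1 - p)
  have hxT : x * T * p = p := by
    linear_combination (norm := noncomm_ring) hxa + x * hTp
  refine ⟨⟨T, x + y - x * T * y, ?_, ?_⟩, rfl⟩
  · linear_combination (norm := noncomm_ring) hTx * (1 - T * y) + hTy
  · linear_combination (norm := noncomm_ring) (1 - x * T) * hyT + hxT

theorem isUnit_iff_isCornerUnit [IsDedekindFiniteMonoid R] :
    IsUnit T ↔ IsCornerUnit p (p * T * p) ∧ IsCornerUnit (1 - p) ((1 - p) * T * (1 - p)) := by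
  refine ⟨fun h => ?_, fun ⟨h₁, h₂⟩ => isUnit_of_isCornerUnit hp hTp h₁ h₂⟩
  obtain ⟨u, rfl⟩ := h
  have hq : IsIdempotentElem (1 - p) := hp.one_sub
  have hleft := corner_mul_corner_of_mul_eq_one hp hTp u.inv_mul
  have hright := corner_one_sub_mul_corner_one_sub_of_mul_eq_one hp hTp u.mul_inv
  exact ⟨hp.isCornerUnit_of_mul_eq ⟨_, rfl⟩ ⟨_, rfl⟩ hleft,
    hq.isCornerUnit_of_mul_eq ⟨_, rfl⟩ ⟨_, rfl⟩
      (hq.mul_eq_symm_of_mem_corner ⟨_, rfl⟩ ⟨_, rfl⟩ hright)⟩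

end Triangular

end Corner

section Spectrum

variable {k A : Type*} [CommSemiring k] [Ring A] [Algebra k A]

theorem IsIdempotentElem.mul_sub_smul_one_mul {e : A} (he : IsIdempotentElem e)
    (T : A) (c : k) : e * (T - c • 1) * e = e * T * e - c • e := by
  rw [mul_sub, sub_mul, mul_smul_comm, mul_one, smul_mul_assoc, he.eq]

theorem sub_smul_one_mul_eq_mul_sub_smul_one_mul {T p : A} (hp : IsIdempotentElem p)
    (hTp : T * p = p * T * p) (c : k) : (T - c • 1) * p = p * (T - c • 1) * p := by
  rw [hp.mul_sub_smul_one_mul, sub_mul, smul_mul_assoc, one_mul, hTp]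

theorem isUnit_algebraMap_sub_iff (T : A) (c : k) :
    IsUnit (algebraMap k A c - T) ↔ IsUnit (T - c • 1) := by
  rw [← IsUnit.neg_iff, neg_sub, Algebra.algebraMap_eq_smul_one]

end Spectrum

theorem spectrum_eq_union_cornerSpectrum {A : Type*} [Ring A] [Algebra ℂ A]
    [IsDedekindFiniteMonoid A] {T p : A} (hp : IsIdempotentElem p) (hTp : T * p = p * T * p) :
    spectrum ℂ T =
      cornerSpectrum p (p * T * p) ∪ cornerSpectrum (1 - p) ((1 - p) * T * (1 - p)) := by
  ext c
  have hcorner := isUnit_iff_isCornerUnit hp (sub_smul_one_mul_eq_mul_sub_smul_one_mul hp hTp c)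
  rw [hp.mul_sub_smul_one_mul, hp.one_sub.mul_sub_smul_one_mul] at hcorner
  rw [spectrum.mem_iff, isUnit_algebraMap_sub_iff, hcorner, not_and_or]
  rfl

/-- Let `A` be a unital `ℂ`-algebra in which every one-sided invertible element is invertible,
`T ∈ A`, and `p` an idempotent with `Tp = pTp`. Then `T` is invertible iff `pTp` is invertible
in the corner ring `pAp` and `(1-p)T(1-p)` is invertible in the corner ring `(1-p)A(1-p)`;
consequently the spectrum of `T` is the union of the spectra of `pTp` and `(1-p)T(1-p)` in the
respective corner rings. -/
theorem stmt_10 {A : Type*} [Ring A] [Algebra ℂ A] (hA : ∀ a b : A, a * b = 1 → b * a = 1)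
    (T p : A) (hp : p * p = p) (hTp : T * p = p * T * p) :
    (IsUnit T ↔
      ((∃ x : A, x = p * x * p ∧ x * (p * T * p) = p ∧ (p * T * p) * x = p) ∧
       (∃ y : A, y = (1 - p) * y * (1 - p) ∧
          y * ((1 - p) * T * (1 - p)) = 1 - p ∧ ((1 - p) * T * (1 - p)) * y = 1 - p))) ∧
    spectrum ℂ T =
      cornerSpectrum p (p * T * p) ∪ cornerSpectrum (1 - p) ((1 - p) * T * (1 - p)) := by
  have : IsDedekindFiniteMonoid A := ⟨hA _ _⟩
  exact ⟨isUnit_iff_isCornerUnit hp hTp, spectrum_eq_union_cornerSpectrum hp hTp⟩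
end

section
/- Let R be a unital ring in which every one-sided invertible element is invertible (i.e., for all a, b ∈ R, ab = 1 implies ba = 1). Let T ∈ R, let 0 = p₀, p₁, …, pₙ = 1 be idempotents in R with pⱼpₖ = p_{min(j,k)} for all j, k (an increasing chain) such that each pⱼ is T-invariant (Tpⱼ = pⱼTpⱼ), and set eⱼ = pⱼ − p_{j−1} and S = Σ_{j=1}^n eⱼ T eⱼ. If T is invertible, then S is invertible and S⁻¹ = Σ_{j=1}^n eⱼ T⁻¹ eⱼ. -/
/-!
Write `U = T⁻¹`. In a Dedekind-finite ring every corner `pRp` is again Dedekind-finite, since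
`a + (1 - p)` and `b + (1 - p)` are inverse to each other in `R` exactly when `a, b ∈ pRp` are
inverse in `pRp`. For a `T`-invariant idempotent `p` we have `pUp · pTp = pUTp = p`, hence also
`pTp · pUp = Tp · pUp = p`, and multiplying by `U` gives `pUp = Up`: every `pⱼ` is `U`-invariant
too. Then each diagonal block satisfies `eⱼTeⱼ · eⱼUeⱼ = eⱼTUeⱼ = eⱼ`, the off-diagonal products
vanish by orthogonality, and `Σⱼ eⱼ = 1` gives `S · Σⱼ eⱼUeⱼ = 1`.
-/

open Finset

section

variable {R : Type*} [Ring R]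

def compress (e x : R) : R := e * x * e

def IsIdempotentChain (n : ℕ) (p : ℕ → R) : Prop :=
  ∀ j k, j ≤ n → k ≤ n → p j * p k = p (min j k)

theorem IsIdempotentElem.mul_eq_self_symm [IsDedekindFiniteMonoid R] {p a b : R}
    (hp : IsIdempotentElem p) (ha : p * a = a) (ha' : a * p = a) (hb : p * b = b)
    (hb' : b * p = b) (h : a * b = p) : b * a = p := by
  have hpa : (1 - p) * a = 0 := by rw [sub_mul, one_mul, ha, sub_self]
  have hap : a * (1 - p) = 0 := by rw [mul_sub, mul_one, ha', sub_self]
  have hpb : (1 - p) * b = 0 := by rw [sub_mul, one_mul, hb, sub_self]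
  have hbp : b * (1 - p) = 0 := by rw [mul_sub, mul_one, hb', sub_self]
  have hq : (1 - p) * (1 - p) = 1 - p := hp.one_sub.eq
  have hab : (a + (1 - p)) * (b + (1 - p)) = 1 := by
    rw [add_mul, mul_add, mul_add, h, hap, hpb, hq]; abel
  have hba := mul_eq_one_symm hab
  rw [add_mul, mul_add, mul_add, hbp, hpa, hq, add_zero, zero_add] at hba
  exact eq_sub_of_add_eq hba |>.trans (sub_sub_cancel 1 p)

theorem IsIdempotentElem.mul_eq_mul_mul_of_inverse [IsDedekindFiniteMonoid R] {p T U : R}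
    (hp : IsIdempotentElem p) (hUT : U * T = 1) (hTp : T * p = p * T * p) :
    U * p = p * U * p := by
  have hTp' : p * (T * p) = T * p := by rw [← mul_assoc, ← hTp]
  have hUTp : p * U * p * (p * T * p) = p := by
    rw [← hTp, mul_assoc _ p, hTp', mul_assoc p U, ← mul_assoc U, hUT, one_mul, hp.eq]
  have hTUp : T * p * (p * U * p) = p := by
    rw [hTp]
    refine hp.mul_eq_self_symm ?_ ?_ ?_ ?_ hUTp <;> simp only [mul_assoc, hp.eq, ← mul_assoc p p]
  calc U * p = U * (T * p * (p * U * p)) := by rw [hTUp]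
    _ = p * U * p := by simp only [← mul_assoc]; rw [hUT, one_mul, hp.eq]

theorem compress_sub_mul_compress_sub {q r T U : R} (hq : IsIdempotentElem q)
    (hr : IsIdempotentElem r) (hqr : q * r = r) (hrq : r * q = r) (hTr : T * r = r * T * r)
    (hUq : U * q = q * U * q) (hUr : U * r = r * U * r) (hTU : T * U = 1) :
    compress (q - r) T * compress (q - r) U = q - r := by
  have her : (q - r) * r = 0 := by rw [sub_mul, hqr, hr.eq, sub_self]
  have heq : (q - r) * q = q - r := by rw [sub_mul, hq.eq, hrq]
  have hee : (q - r) * (q - r) = q - r := by rw [mul_sub, heq, her, sub_zero]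
  have hUe : compress (q - r) U = (q - r) * U * q := by
    rw [compress, mul_sub, mul_assoc _ U r, hUr, ← mul_assoc, ← mul_assoc, her, zero_mul,
      zero_mul, sub_zero]
  calc compress (q - r) T * compress (q - r) U
      = (q - r) * T * ((q - r) * (q - r)) * U * q := by rw [hUe, compress]; noncomm_ring
    _ = (q - r) * T * (q * U * q) - (q - r) * (T * r) * (U * q) := by rw [hee]; noncomm_ring
    _ = (q - r) * (T * U) * q - (q - r) * r * T * r * U * q := by
        rw [← hUq, hTr]; noncomm_ring
    _ = q - r := by simp only [hTU, her, mul_one, heq, zero_mul, sub_zero]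

theorem sum_compress_mul_sum_compress {ι : Type*} {s : Finset ι} {e : ι → R}
    (horth : (s : Set ι).Pairwise fun i j ↦ e i * e j = 0) (hsum : ∑ i ∈ s, e i = 1) {A B : R}
    (hdiag : ∀ i ∈ s, compress (e i) A * compress (e i) B = e i) :
    (∑ i ∈ s, compress (e i) A) * (∑ i ∈ s, compress (e i) B) = 1 := by
  rw [sum_mul_sum, ← hsum]
  refine sum_congr rfl fun i hi ↦ ?_
  rw [sum_eq_single_of_mem i hi fun j hj hji ↦ ?_, hdiag i hi]
  calc compress (e i) A * compress (e j) B = e i * A * (e i * e j) * B * e j := by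
        simp only [compress, mul_assoc]
    _ = 0 := by rw [horth hi hj hji.symm, mul_zero, zero_mul, zero_mul]

theorem sum_Icc_one_sub_pred {M : Type*} [AddCommGroup M] (f : ℕ → M) (n : ℕ) :
    ∑ j ∈ Icc 1 n, (f j - f (j - 1)) = f n - f 0 := by
  induction n with
  | zero => simp
  | succ n ih => rw [sum_Icc_succ_top (by omega), ih, Nat.add_sub_cancel]; abel

variable {n : ℕ} {p : ℕ → R}

theorem sub_pred_mul_sub_pred_of_ne (hchain : IsIdempotentChain n p)
    {j k : ℕ} (hj : j ≤ n) (hk : k ≤ n) (hjk : j ≠ k) :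
    (p j - p (j - 1)) * (p k - p (k - 1)) = 0 := by
  rw [sub_mul, mul_sub, mul_sub, hchain j k hj hk, hchain j (k - 1) hj (by omega),
    hchain (j - 1) k (by omega) hk, hchain (j - 1) (k - 1) (by omega) (by omega)]
  obtain ⟨h₁, h₂⟩ | ⟨h₁, h₂⟩ : (min j k = min j (k - 1) ∧ min (j - 1) k = min (j - 1) (k - 1)) ∨
      (min j k = min (j - 1) k ∧ min j (k - 1) = min (j - 1) (k - 1)) := by omega
  all_goals rw [h₁, h₂]; abel

theorem isIdempotentElem_of_chain (hchain : IsIdempotentChain n p)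
    {j : ℕ} (hj : j ≤ n) : IsIdempotentElem (p j) :=
  (hchain j j hj hj).trans (congrArg p (min_self j))

theorem compress_sub_pred_mul_compress_sub_pred (hchain : IsIdempotentChain n p)
    {A B : R} (hA : ∀ j ≤ n, A * p j = p j * A * p j) (hB : ∀ j ≤ n, B * p j = p j * B * p j)
    (hAB : A * B = 1) {j : ℕ} (hj : j ≤ n) :
    compress (p j - p (j - 1)) A * compress (p j - p (j - 1)) B = p j - p (j - 1) := by
  have hj' : j - 1 ≤ n := by omega
  refine compress_sub_mul_compress_sub (isIdempotentElem_of_chain hchain hj)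
    (isIdempotentElem_of_chain hchain hj') ?_ ?_ (hA _ hj') (hB _ hj) (hB _ hj') hAB
  · rw [hchain _ _ hj hj', min_eq_right (Nat.sub_le j 1)]
  · rw [hchain _ _ hj' hj, min_eq_left (Nat.sub_le j 1)]

theorem sum_compress_sub_pred_mul_sum_compress_sub_pred (hchain : IsIdempotentChain n p)
    (hp0 : p 0 = 0) (hpn : p n = 1) {A B : R} (hA : ∀ j ≤ n, A * p j = p j * A * p j)
    (hB : ∀ j ≤ n, B * p j = p j * B * p j) (hAB : A * B = 1) :
    (∑ j ∈ Icc 1 n, compress (p j - p (j - 1)) A) *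
      (∑ j ∈ Icc 1 n, compress (p j - p (j - 1)) B) = 1 := by
  refine sum_compress_mul_sum_compress (fun j hj k hk hjk ↦ ?_) ?_ fun j hj ↦ ?_
  · exact sub_pred_mul_sub_pred_of_ne hchain (mem_Icc.mp hj).2 (mem_Icc.mp hk).2 hjk
  · rw [sum_Icc_one_sub_pred, hpn, hp0, sub_zero]
  · exact compress_sub_pred_mul_compress_sub_pred hchain hA hB hAB (mem_Icc.mp hj).2

end

/-- Let `R` be a unital ring in which every one-sided invertible element is invertible. Let
`T ∈ R`, let `0 = p₀, p₁, …, pₙ = 1` be an increasing chain of `T`-invariant idempotents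
(`pⱼpₖ = p_{min(j,k)}`), and set `eⱼ = pⱼ - p_{j-1}` and `S = Σⱼ eⱼ T eⱼ`. If `T` is
invertible, then `S` is invertible and `S⁻¹ = Σⱼ eⱼ T⁻¹ eⱼ`. -/
theorem stmt_12 {R : Type*} [Ring R] (hR : ∀ a b : R, a * b = 1 → b * a = 1)
    (T : R) (n : ℕ) (p : ℕ → R) (hp0 : p 0 = 0) (hpn : p n = 1)
    (hchain : ∀ j k, j ≤ n → k ≤ n → p j * p k = p (min j k))
    (hTp : ∀ j ≤ n, T * p j = p j * T * p j)
    (S : R) (hS : S = ∑ j ∈ Finset.Icc 1 n, (p j - p (j - 1)) * T * (p j - p (j - 1)))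
    (hT : IsUnit T) :
    IsUnit S ∧
    Ring.inverse S =
      ∑ j ∈ Finset.Icc 1 n, (p j - p (j - 1)) * Ring.inverse T * (p j - p (j - 1)) := by
  have : IsDedekindFiniteMonoid R := ⟨hR _ _⟩
  set U := Ring.inverse T
  have hUT : U * T = 1 := Ring.inverse_mul_cancel T hT
  have hUp : ∀ j ≤ n, U * p j = p j * U * p j := fun j hj ↦
    (isIdempotentElem_of_chain hchain hj).mul_eq_mul_mul_of_inverse hUT (hTp j hj)
  have hSU : S * ∑ j ∈ Icc 1 n, (p j - p (j - 1)) * U * (p j - p (j - 1)) = 1 := by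
    rw [hS]
    exact sum_compress_sub_pred_mul_sum_compress_sub_pred hchain hp0 hpn hTp hUp
      (Ring.mul_inverse_cancel T hT)
  have hSunit : IsUnit S := .of_mul_eq_one _ hSU
  refine ⟨hSunit, ?_⟩
  calc Ring.inverse S = Ring.inverse S * (S * _) := by rw [hSU, mul_one]
    _ = _ := Ring.inverse_mul_cancel_left S _ hSunit
end

section
/- Let A be a unital algebra over ℂ in which every one-sided invertible element is invertible (i.e., for all a, b, ab = 1 implies ba = 1). Let T ∈ A, let 0 = p₀, p₁, …, pₙ = 1 be idempotents in A with pⱼpₖ = p_{min(j,k)} for all j, k such that each pⱼ is T-invariant (Tpⱼ = pⱼTpⱼ), and set eⱼ = pⱼ − p_{j−1} and S = Σ_{j=1}^n eⱼ T eⱼ. Then the spectrum of S equals the spectrum of T. -/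
/-!
Relative to the chain `p`, an element `x` with `x pⱼ = pⱼ x pⱼ` for all `j` is block upper
triangular, and `S` is the block diagonal of `T`. Taking block diagonals is multiplicative on
block upper triangular elements. If such an `x` is invertible, its inverse is again block upper
triangular: in each corner `pⱼ A pⱼ` the compression of `x⁻¹` is a left inverse of that of `x`,
and corners inherit Dedekind-finiteness from `A`. Hence the block diagonal of `x` is invertible.
Conversely, if the block diagonal `d` of `x` is invertible, `d⁻¹` commutes with every `pⱼ`, so
`d⁻¹ x` is block upper triangular with block diagonal `1`, i.e. unipotent. Apply this to `z - T`.
-/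

open Finset

section DedekindFinite

variable {A : Type*} [Ring A] [IsDedekindFiniteMonoid A] {q : A}

/-- Padding `q a q` and `q b q` by `1 - q` gives a one-sided inverse pair in `A`. -/
theorem IsIdempotentElem.corner_mul_eq_self_symm (hq : IsIdempotentElem q) {a b : A}
    (h : q * a * q * (q * b * q) = q) : q * b * q * (q * a * q) = q := by
  have hpad : (q * a * q + (1 - q)) * (q * b * q + (1 - q)) = 1 := by
    rw [mul_add, add_mul, add_mul, h, mul_assoc (q * a), hq.mul_one_sub_self,
      ← mul_assoc (1 - q), ← mul_assoc (1 - q), hq.one_sub_mul_self, hq.one_sub.eq]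
    noncomm_ring
  have hleft : q * (q * b * q + (1 - q)) = q * b * q := by
    rw [mul_add, hq.mul_one_sub_self, add_zero, ← mul_assoc, ← mul_assoc, hq.eq]
  have hright : (q * a * q + (1 - q)) * q = q * a * q := by
    rw [add_mul, hq.one_sub_mul_self, add_zero, hq.mul_mul_self]
  calc q * b * q * (q * a * q)
      = q * (q * b * q + (1 - q)) * ((q * a * q + (1 - q)) * q) := by rw [hleft, hright]
    _ = q * ((q * b * q + (1 - q)) * (q * a * q + (1 - q))) * q := by simp only [mul_assoc]
    _ = q := by rw [mul_eq_one_symm hpad, mul_one, hq.eq]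

theorem IsIdempotentElem.units_inv_mul_eq (hq : IsIdempotentElem q) (u : Aˣ)
    (hu : (u : A) * q = q * u * q) : (↑u⁻¹ : A) * q = q * ↑u⁻¹ * q := by
  have hu' : q * (u * q) = u * q := by rw [← mul_assoc, ← hu]
  have hcorner : q * ↑u⁻¹ * q * (q * u * q) = q := by
    simp only [mul_assoc, hu', Units.inv_mul_cancel_left, hq.eq]
  calc (↑u⁻¹ : A) * q = ↑u⁻¹ * (q * u * q * (q * ↑u⁻¹ * q)) := by
        rw [hq.corner_mul_eq_self_symm hcorner]
    _ = q * ↑u⁻¹ * q := by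
        simp only [mul_assoc, hu', Units.inv_mul_cancel_left, hq.mul_self_mul]

end DedekindFinite

section IdempotentChain

variable {A : Type*} [Ring A]

structure IsIdempotentChain_s13 (n : ℕ) (p : ℕ → A) : Prop where
  zero : p 0 = 0
  last : p n = 1
  mul_eq_min : ∀ j k, j ≤ n → k ≤ n → p j * p k = p (min j k)

namespace IdempotentChain

def block (p : ℕ → A) (i : ℕ) : A := p (i + 1) - p i

def blockDiag (n : ℕ) (p : ℕ → A) (x : A) : A := ∑ i ∈ range n, block p i * x * block p i

def IsUpperTriangular (n : ℕ) (p : ℕ → A) (x : A) : Prop :=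
  ∀ j ≤ n, x * p j = p j * x * p j

theorem blockDiag_sub (n : ℕ) (p : ℕ → A) (x y : A) :
    blockDiag n p (x - y) = blockDiag n p x - blockDiag n p y := by
  simp only [blockDiag, mul_sub, sub_mul, sum_sub_distrib]

theorem IsUpperTriangular.mul {n : ℕ} {p : ℕ → A} {x y : A} (hx : IsUpperTriangular n p x)
    (hy : IsUpperTriangular n p y) : IsUpperTriangular n p (x * y) := fun j hj => by
  rw [mul_assoc, hy j hj, ← mul_assoc, ← mul_assoc, hx j hj,
    show p j * x * p j * y * p j = p j * x * (p j * y * p j) by simp only [mul_assoc], ← hy j hj]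
  simp only [mul_assoc]

theorem IsUpperTriangular.sub {n : ℕ} {p : ℕ → A} {x y : A} (hx : IsUpperTriangular n p x)
    (hy : IsUpperTriangular n p y) : IsUpperTriangular n p (x - y) := fun j hj => by
  rw [sub_mul, mul_sub, sub_mul, hx j hj, hy j hj]

theorem isNilpotent_of_mul_succ_eq {n : ℕ} {p : ℕ → A} (hp0 : p 0 = 0) (hpn : p n = 1) {v : A}
    (hv : ∀ i < n, v * p (i + 1) = p i * v * p (i + 1)) : IsNilpotent v := by
  have hpow : ∀ j ≤ n, v ^ j * p j = 0 := by
    intro j hj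
    induction j with
    | zero => rw [hp0, mul_zero]
    | succ j ih =>
      rw [pow_succ, mul_assoc, hv j hj, ← mul_assoc, ← mul_assoc, ih (by omega), zero_mul,
        zero_mul]
  exact ⟨n, by rw [← mul_one (v ^ n), ← hpn, hpow n le_rfl]⟩

end IdempotentChain

namespace IsIdempotentChain_s13

open IdempotentChain

variable {n : ℕ} {p : ℕ → A}

theorem isIdempotentElem (hp : IsIdempotentChain_s13 n p) {j : ℕ} (hj : j ≤ n) :
    IsIdempotentElem (p j) :=
  (hp.mul_eq_min j j hj hj).trans (by rw [min_self])

theorem block_mul (hp : IsIdempotentChain_s13 n p) {i j : ℕ} (hi : i < n) (hj : j ≤ n) :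
    block p i * p j = if i < j then block p i else 0 := by
  rw [block.eq_def, sub_mul, hp.mul_eq_min _ _ hi hj, hp.mul_eq_min _ _ hi.le hj]
  split_ifs with h
  · rw [min_eq_left h, min_eq_left h.le]
  · rw [min_eq_right (by omega), min_eq_right (by omega), sub_self]

theorem mul_block (hp : IsIdempotentChain_s13 n p) {i j : ℕ} (hi : i < n) (hj : j ≤ n) :
    p j * block p i = if i < j then block p i else 0 := by
  rw [block.eq_def, mul_sub, hp.mul_eq_min _ _ hj hi, hp.mul_eq_min _ _ hj hi.le]
  split_ifs with h
  · rw [min_eq_right h, min_eq_right h.le]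
  · rw [min_eq_left (by omega), min_eq_left (by omega), sub_self]

theorem block_mul_block (hp : IsIdempotentChain_s13 n p) {i k : ℕ} (hi : i < n) (hk : k < n) :
    block p i * block p k = if i = k then block p i else 0 := by
  rw [show block p k = p (k + 1) - p k from rfl, mul_sub, hp.block_mul hi hk,
    hp.block_mul hi hk.le]
  split_ifs <;> first | omega | simp

theorem sum_block (hp : IsIdempotentChain_s13 n p) : ∑ i ∈ range n, block p i = 1 := by
  unfold block
  rw [sum_range_sub p, hp.last, hp.zero, sub_zero]

theorem isUpperTriangular_of_commute (hp : IsIdempotentChain_s13 n p) {c : A}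
    (hc : ∀ j ≤ n, Commute c (p j)) : IsUpperTriangular n p c := fun j hj => by
  rw [← (hc j hj).eq, mul_assoc, (hp.isIdempotentElem hj).eq]

theorem blockDiag_eq_self_of_commute (hp : IsIdempotentChain_s13 n p) {c : A}
    (hc : ∀ j ≤ n, Commute c (p j)) : blockDiag n p c = c := by
  have hblock : ∀ i ∈ range n, block p i * c * block p i = c * block p i := fun i hi => by
    have hi := mem_range.mp hi
    have hcomm : Commute c (block p i) := (hc _ hi).sub_right (hc _ hi.le)
    rw [← hcomm.eq, mul_assoc, hp.block_mul_block hi hi, if_pos rfl]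
  rw [blockDiag, sum_congr rfl hblock, ← mul_sum, hp.sum_block, mul_one]

theorem blockDiag_one (hp : IsIdempotentChain_s13 n p) : blockDiag n p (1 : A) = 1 :=
  hp.blockDiag_eq_self_of_commute fun j _ => Commute.one_left (p j)

theorem blockDiag_mul_block (hp : IsIdempotentChain_s13 n p) (x : A) {i : ℕ} (hi : i < n) :
    blockDiag n p x * block p i = block p i * x * block p i := by
  rw [blockDiag, sum_mul, sum_eq_single i]
  · rw [mul_assoc, hp.block_mul_block hi hi, if_pos rfl]
  · intro k hk hki
    rw [mul_assoc, hp.block_mul_block (mem_range.mp hk) hi, if_neg hki, mul_zero]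
  · exact fun hni => absurd (mem_range.mpr hi) hni

theorem commute_blockDiag (hp : IsIdempotentChain_s13 n p) (x : A) {j : ℕ} (hj : j ≤ n) :
    Commute (blockDiag n p x) (p j) := by
  rw [Commute, SemiconjBy, blockDiag, sum_mul, mul_sum]
  refine sum_congr rfl fun i hi => ?_
  have hi := mem_range.mp hi
  rw [mul_assoc, hp.block_mul hi hj, ← mul_assoc, ← mul_assoc, hp.mul_block hi hj]
  split_ifs <;> simp

theorem block_mul_mul_block_eq_zero (hp : IsIdempotentChain_s13 n p) {x : A}
    (hx : IsUpperTriangular n p x) {i k : ℕ} (hki : k < i) (hi : i < n) :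
    block p i * x * block p k = 0 := by
  have hk : k + 1 ≤ n := by omega
  have hblock : p (k + 1) * block p k = block p k := by
    rw [hp.mul_block (by omega) hk, if_pos (Nat.lt_succ_self k)]
  calc block p i * x * block p k = block p i * (x * p (k + 1)) * block p k := by
        simp only [mul_assoc, hblock]
    _ = block p i * p (k + 1) * x * p (k + 1) * block p k := by
        rw [hx _ hk]; simp only [mul_assoc]
    _ = 0 := by rw [hp.block_mul hi hk, if_neg (by omega), zero_mul, zero_mul, zero_mul]

theorem blockDiag_mul (hp : IsIdempotentChain_s13 n p) {x y : A} (hx : IsUpperTriangular n p x)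
    (hy : IsUpperTriangular n p y) :
    blockDiag n p (x * y) = blockDiag n p x * blockDiag n p y := by
  have hsplit : x * y = ∑ k ∈ range n, x * block p k * y := by
    rw [← sum_mul, ← mul_sum, hp.sum_block, mul_one]
  have hterm : ∀ i ∈ range n,
      block p i * (x * y) * block p i = block p i * x * block p i * y * block p i := by
    intro i hi
    have hi := mem_range.mp hi
    rw [hsplit, mul_sum, sum_mul, sum_eq_single i]
    · simp only [mul_assoc]
    · intro k hk hki
      have hk := mem_range.mp hk
      rcases lt_or_gt_of_ne hki with hlt | hgt
      · rw [← mul_assoc, ← mul_assoc, hp.block_mul_mul_block_eq_zero hx hlt hi, zero_mul,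
          zero_mul]
      · rw [← (hp.block_mul_block hk hk).trans (if_pos rfl),
          show block p i * (x * (block p k * block p k) * y) * block p i
            = block p i * x * block p k * (block p k * y * block p i) by simp only [mul_assoc],
          hp.block_mul_mul_block_eq_zero hy hgt hk, mul_zero]
    · exact fun hni => absurd (mem_range.mpr hi) hni
  rw [blockDiag.eq_1 n p y, mul_sum, blockDiag, sum_congr rfl hterm]
  refine sum_congr rfl fun i hi => ?_
  rw [← mul_assoc, ← mul_assoc, hp.blockDiag_mul_block x (mem_range.mp hi)]

theorem isUpperTriangular_units_inv [IsDedekindFiniteMonoid A] (hp : IsIdempotentChain_s13 n p)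
    {u : Aˣ} (hu : IsUpperTriangular n p u) : IsUpperTriangular n p ↑u⁻¹ :=
  fun j hj => (hp.isIdempotentElem hj).units_inv_mul_eq u (hu j hj)

theorem isUnit_blockDiag [IsDedekindFiniteMonoid A] (hp : IsIdempotentChain_s13 n p) {x : A}
    (hx : IsUpperTriangular n p x) (hunit : IsUnit x) : IsUnit (blockDiag n p x) := by
  obtain ⟨u, rfl⟩ := hunit
  have h : blockDiag n p u * blockDiag n p ↑u⁻¹ = 1 := by
    rw [← hp.blockDiag_mul hx (hp.isUpperTriangular_units_inv hx), Units.mul_inv,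
      hp.blockDiag_one]
  exact ⟨⟨_, _, h, mul_eq_one_symm h⟩, rfl⟩

theorem mul_succ (hp : IsIdempotentChain_s13 n p) {x : A} (hx : IsUpperTriangular n p x) {i : ℕ}
    (hi : i < n) : x * p (i + 1) = p i * x * p (i + 1) + block p i * x * block p i := by
  have hvanish : block p i * x * p i = 0 := by
    rw [mul_assoc, hx i hi.le, ← mul_assoc, ← mul_assoc, hp.block_mul hi hi.le,
      if_neg (lt_irrefl i), zero_mul, zero_mul]
  calc x * p (i + 1) = p (i + 1) * x * p (i + 1) := hx _ hi
    _ = p i * x * p (i + 1) + (block p i * x * block p i + block p i * x * p i) := by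
        unfold block; noncomm_ring
    _ = p i * x * p (i + 1) + block p i * x * block p i := by rw [hvanish, add_zero]

theorem isNilpotent_of_blockDiag_eq_zero (hp : IsIdempotentChain_s13 n p) {x : A}
    (hx : IsUpperTriangular n p x) (h0 : blockDiag n p x = 0) : IsNilpotent x :=
  isNilpotent_of_mul_succ_eq hp.zero hp.last fun i hi => by
    rw [hp.mul_succ hx hi, ← hp.blockDiag_mul_block x hi, h0, zero_mul, add_zero]

theorem isUnit_of_isUnit_blockDiag (hp : IsIdempotentChain_s13 n p) {x : A}
    (hx : IsUpperTriangular n p x) (hunit : IsUnit (blockDiag n p x)) : IsUnit x := by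
  obtain ⟨u, hu⟩ := hunit
  have hc : ∀ j ≤ n, Commute (↑u⁻¹ : A) (p j) := fun j hj =>
    Commute.units_inv_left (hu ▸ hp.commute_blockDiag x hj)
  have hinv : IsUpperTriangular n p ↑u⁻¹ := hp.isUpperTriangular_of_commute hc
  have hdiag : blockDiag n p (↑u⁻¹ * x - 1) = 0 := by
    rw [blockDiag_sub, hp.blockDiag_mul hinv hx,
      hp.blockDiag_eq_self_of_commute hc, ← hu, Units.inv_mul, hp.blockDiag_one, sub_self]
  have hnil := hp.isNilpotent_of_blockDiag_eq_zero
    ((hinv.mul hx).sub (hp.isUpperTriangular_of_commute fun j _ => Commute.one_left (p j))) hdiag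
  have hx' : x = u * (1 + (↑u⁻¹ * x - 1)) := by rw [add_sub_cancel, Units.mul_inv_cancel_left]
  rw [hx']
  exact u.isUnit.mul hnil.isUnit_one_add

theorem isUnit_blockDiag_iff [IsDedekindFiniteMonoid A] (hp : IsIdempotentChain_s13 n p) {x : A}
    (hx : IsUpperTriangular n p x) : IsUnit (blockDiag n p x) ↔ IsUnit x :=
  ⟨hp.isUnit_of_isUnit_blockDiag hx, hp.isUnit_blockDiag hx⟩

theorem spectrum_blockDiag {R : Type*} [CommRing R] [Algebra R A] [IsDedekindFiniteMonoid A]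
    (hp : IsIdempotentChain_s13 n p) {T : A} (hT : IsUpperTriangular n p T) :
    spectrum R (blockDiag n p T) = spectrum R T := by
  ext z
  have hz : ∀ j ≤ n, Commute (algebraMap R A z) (p j) := fun j _ => Algebra.commutes z (p j)
  have hdiag : blockDiag n p (algebraMap R A z - T) = algebraMap R A z - blockDiag n p T := by
    rw [blockDiag_sub, hp.blockDiag_eq_self_of_commute hz]
  rw [spectrum.mem_iff, spectrum.mem_iff, not_iff_not, ← hdiag,
    hp.isUnit_blockDiag_iff ((hp.isUpperTriangular_of_commute hz).sub hT)]

end IsIdempotentChain_s13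

end IdempotentChain

/-- Let `A` be a unital `ℂ`-algebra in which every one-sided invertible element is invertible.
Let `T ∈ A`, let `0 = p₀, p₁, …, pₙ = 1` be an increasing chain of `T`-invariant idempotents
(`pⱼpₖ = p_{min(j,k)}`), and set `eⱼ = pⱼ - p_{j-1}` and `S = Σⱼ eⱼ T eⱼ`. Then the spectrum
of `S` equals the spectrum of `T`. -/
theorem stmt_13 {A : Type*} [Ring A] [Algebra ℂ A] (hA : ∀ a b : A, a * b = 1 → b * a = 1)
    (T : A) (n : ℕ) (p : ℕ → A) (hp0 : p 0 = 0) (hpn : p n = 1)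
    (hchain : ∀ j k, j ≤ n → k ≤ n → p j * p k = p (min j k))
    (hTp : ∀ j ≤ n, T * p j = p j * T * p j)
    (S : A) (hS : S = ∑ j ∈ Finset.Icc 1 n, (p j - p (j - 1)) * T * (p j - p (j - 1))) :
    spectrum ℂ S = spectrum ℂ T := by
  have hp : IsIdempotentChain_s13 n p := ⟨hp0, hpn, hchain⟩
  have : IsDedekindFiniteMonoid A := ⟨hA _ _⟩
  have hS' : S = IdempotentChain.blockDiag n p T := by
    rw [hS, ← Ico_add_one_right_eq_Icc, sum_Ico_eq_sum_range]
    simp only [IdempotentChain.blockDiag, IdempotentChain.block, add_comm 1, add_tsub_cancel_right]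
  rw [hS', hp.spectrum_blockDiag hTp]
end

section
/- Let A be a unital algebra over ℂ, let T ∈ A, let 0 = p₀, p₁, …, pₙ = 1 be idempotents in A with pⱼpₖ = p_{min(j,k)} for all j, k such that each pⱼ is T-invariant (Tpⱼ = pⱼTpⱼ), and set eⱼ = pⱼ − p_{j−1} and S = Σ_{j=1}^n eⱼ T eⱼ. Then for every polynomial q with complex coefficients, q(S) = Σ_{j=1}^n eⱼ q(T) eⱼ. -/
/-
`T`-invariance of the chain says that `T` is block upper triangular for the decomposition
`1 = ∑ eⱼ`. On block upper triangular elements the compression `x ↦ ∑ eⱼ x eⱼ` is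
multiplicative: `y eⱼ = pⱼ y eⱼ = (eⱼ + pⱼ₋₁) y eⱼ` and `eⱼ x pⱼ₋₁ = eⱼ pⱼ₋₁ x pⱼ₋₁ = 0`, so
`eⱼ x y eⱼ = eⱼ x eⱼ y eⱼ`. Hence the compression is a unital algebra homomorphism on the
subalgebra of elements leaving every `pₖ` invariant, so it commutes with polynomial evaluation,
and `S` is the compression of `T`.
-/

open Finset Polynomial

section Ring

variable {A : Type*} [Ring A]

theorem sub_mul_mul_sub_of_invariant {P Q x y : A} (hP : IsIdempotentElem P)
    (hQ : IsIdempotentElem Q) (hPQ : P * Q = Q) (hx : x * Q = Q * x * Q)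
    (hy : y * P = P * y * P) :
    (P - Q) * (x * y) * (P - Q) = (P - Q) * x * (P - Q) * y * (P - Q) := by
  have hPE : P * (P - Q) = P - Q := by rw [mul_sub, hP.eq, hPQ]
  have hEQ : (P - Q) * Q = 0 := by rw [sub_mul, hPQ, hQ.eq, sub_self]
  have hyE : y * (P - Q) = P * y * (P - Q) := by
    rw [← hPE, ← mul_assoc, hy, mul_assoc (P * y)]
  have hExQ : (P - Q) * x * Q = 0 := by
    rw [mul_assoc, hx, ← mul_assoc, ← mul_assoc, hEQ, zero_mul, zero_mul]
  calc (P - Q) * (x * y) * (P - Q) = (P - Q) * x * (P * y * (P - Q)) := by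
        rw [← hyE]; noncomm_ring
    _ = (P - Q) * x * (P - Q) * y * (P - Q) + (P - Q) * x * Q * (y * (P - Q)) := by
        noncomm_ring
    _ = (P - Q) * x * (P - Q) * y * (P - Q) := by rw [hExQ, zero_mul, add_zero]

section Chain

variable {p : ℕ → A} {n : ℕ}
  (hchain : ∀ j k, j ≤ n → k ≤ n → p j * p k = p (min j k))

include hchain

theorem isIdempotentElem_of_chain_s14 {k : ℕ} (hk : k ≤ n) : IsIdempotentElem (p k) := by
  rw [IsIdempotentElem, hchain k k hk hk, min_self]

theorem sub_mul_sub_eq_zero_of_chain {j k : ℕ} (hjk : j < k) (hk : k ≤ n) :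
    (p j - p (j - 1)) * (p k - p (k - 1)) = 0 ∧ (p k - p (k - 1)) * (p j - p (j - 1)) = 0 := by
  have hle : ∀ a b, a ≤ b → b ≤ n → p a * p b = p a ∧ p b * p a = p a := fun a b hab hb =>
    ⟨by rw [hchain a b (hab.trans hb) hb, min_eq_left hab],
      by rw [hchain b a hb (hab.trans hb), min_eq_right hab]⟩
  simp only [sub_mul, mul_sub, (hle j k (by omega) hk).1, (hle j (k - 1) (by omega) (by omega)).1,
    (hle (j - 1) k (by omega) hk).1, (hle (j - 1) (k - 1) (by omega) (by omega)).1,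
    (hle j k (by omega) hk).2, (hle j (k - 1) (by omega) (by omega)).2,
    (hle (j - 1) k (by omega) hk).2, (hle (j - 1) (k - 1) (by omega) (by omega)).2]
  constructor <;> abel

theorem completeOrthogonalIdempotents_sub_of_chain (hp0 : p 0 = 0) (hpn : p n = 1) :
    CompleteOrthogonalIdempotents fun j : Icc 1 n => p j - p (j - 1) := by
  rw [CompleteOrthogonalIdempotents.iff_ortho_complete]
  constructor
  · rintro ⟨j, hj⟩ ⟨k, hk⟩ hjk
    rw [mem_Icc] at hj hk
    rcases lt_or_gt_of_ne (Subtype.coe_ne_coe.mpr hjk) with hlt | hgt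
    · exact (sub_mul_sub_eq_zero_of_chain hchain hlt hk.2).1
    · exact (sub_mul_sub_eq_zero_of_chain hchain hgt hj.2).2
  · have telescope : ∀ m, ∑ j ∈ Icc 1 m, (p j - p (j - 1)) = p m - p 0 := by
      intro m
      induction m with
      | zero => simp
      | succ m ih => rw [sum_Icc_succ_top (by omega), ih, Nat.add_sub_cancel]; abel
    rw [sum_coe_sort (Icc 1 n) fun j => p j - p (j - 1), telescope, hpn, hp0, sub_zero]

theorem sub_mul_mul_sub_of_chain {j : ℕ} (hj : j ≤ n) {x y : A}
    (hx : ∀ k ≤ n, x * p k = p k * x * p k) (hy : ∀ k ≤ n, y * p k = p k * y * p k) :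
    (p j - p (j - 1)) * (x * y) * (p j - p (j - 1)) =
      (p j - p (j - 1)) * x * (p j - p (j - 1)) * y * (p j - p (j - 1)) :=
  sub_mul_mul_sub_of_invariant (isIdempotentElem_of_chain_s14 hchain hj)
    (isIdempotentElem_of_chain_s14 hchain (by omega))
    (by rw [hchain j (j - 1) hj (by omega), min_eq_right (Nat.sub_le j 1)])
    (hx (j - 1) (by omega)) (hy j hj)

end Chain

end Ring

section Algebra

variable {R A : Type*} [CommSemiring R] [Ring A] [Algebra R A]

variable (R) in
def invariantSubalgebra (P : Set A) (hP : ∀ p ∈ P, IsIdempotentElem p) : Subalgebra R A where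
  carrier := {x | ∀ p ∈ P, x * p = p * x * p}
  mul_mem' {x y} hx hy p hp := by
    calc x * y * p = x * (p * y * p) := by rw [mul_assoc, hy p hp]
      _ = x * p * (y * p) := by simp only [mul_assoc]
      _ = p * x * p * (y * p) := by rw [hx p hp]
      _ = p * x * (p * y * p) := by simp only [mul_assoc]
      _ = p * (x * y) * p := by rw [← hy p hp]; simp only [mul_assoc]
  add_mem' {x y} hx hy p hp := by rw [add_mul, hx p hp, hy p hp]; noncomm_ring
  algebraMap_mem' r p hp := by rw [← Algebra.commutes, mul_assoc, (hP p hp).eq]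

variable {I : Type*} [Fintype I]

variable (R) in
def blockDiag (e : I → A) : A →ₗ[R] A :=
  ∑ i, LinearMap.mulLeft R (e i) ∘ₗ LinearMap.mulRight R (e i)

theorem blockDiag_apply (e : I → A) (x : A) : blockDiag R e x = ∑ i, e i * x * e i := by
  simp [blockDiag, mul_assoc]

theorem blockDiag_one {e : I → A} (he : CompleteOrthogonalIdempotents e) :
    blockDiag R e 1 = 1 := by
  simp only [blockDiag_apply, mul_one, fun i => (he.idem i).eq, he.complete]

theorem blockDiag_mul {e : I → A} (he : OrthogonalIdempotents e) {x y : A}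
    (hxy : ∀ i, e i * (x * y) * e i = e i * x * e i * y * e i) :
    blockDiag R e (x * y) = blockDiag R e x * blockDiag R e y := by
  classical
  simp only [blockDiag_apply, hxy, sum_mul, mul_sum]
  refine sum_congr rfl fun i _ => ?_
  rw [Finset.sum_eq_single i]
  · simp only [mul_assoc, (he.idem i).mul_self_mul]
  · intro j _ hji
    simp only [mul_assoc]
    rw [← mul_assoc (e j) (e i), he.ortho hji, zero_mul, mul_zero, mul_zero]
  · simp

variable {e : I → A} (he : CompleteOrthogonalIdempotents e) (B : Subalgebra R A)
  (hB : ∀ x ∈ B, ∀ y ∈ B, ∀ i, e i * (x * y) * e i = e i * x * e i * y * e i)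

def blockDiagAlgHom : B →ₐ[R] A :=
  AlgHom.ofLinearMap (blockDiag R e ∘ₗ B.val.toLinearMap) (blockDiag_one he)
    fun x y => blockDiag_mul he.toOrthogonalIdempotents (hB x x.2 y y.2)

include he hB in
theorem aeval_blockDiag {x : A} (hx : x ∈ B) (q : R[X]) :
    aeval (blockDiag R e x) q = blockDiag R e (aeval x q) := by
  calc aeval (blockDiag R e x) q = aeval (blockDiagAlgHom he B hB ⟨x, hx⟩) q := rfl
    _ = blockDiagAlgHom he B hB (aeval ⟨x, hx⟩ q) := aeval_algHom_apply _ _ _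
    _ = blockDiag R e (aeval x q) := congrArg (blockDiag R e) (aeval_subalgebra_coe q B ⟨x, hx⟩)

end Algebra

/-- Let `A` be a unital `ℂ`-algebra, `T ∈ A`, let `0 = p₀, p₁, …, pₙ = 1` be an increasing
chain of `T`-invariant idempotents (`pⱼpₖ = p_{min(j,k)}`), and set `eⱼ = pⱼ - p_{j-1}` and
`S = Σⱼ eⱼ T eⱼ`. Then for every polynomial `q` with complex coefficients,
`q(S) = Σⱼ eⱼ q(T) eⱼ`. -/
theorem stmt_14 {A : Type*} [Ring A] [Algebra ℂ A]
    (T : A) (n : ℕ) (p : ℕ → A) (hp0 : p 0 = 0) (hpn : p n = 1)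
    (hchain : ∀ j k, j ≤ n → k ≤ n → p j * p k = p (min j k))
    (hTp : ∀ j ≤ n, T * p j = p j * T * p j)
    (S : A) (hS : S = ∑ j ∈ Finset.Icc 1 n, (p j - p (j - 1)) * T * (p j - p (j - 1)))
    (q : Polynomial ℂ) :
    Polynomial.aeval S q =
      ∑ j ∈ Finset.Icc 1 n, (p j - p (j - 1)) * Polynomial.aeval T q * (p j - p (j - 1)) := by
  let B := invariantSubalgebra ℂ (p '' Set.Iic n) (Set.forall_mem_image.mpr
    fun _ hk => isIdempotentElem_of_chain_s14 hchain hk)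
  have mem_B {x : A} : x ∈ B ↔ ∀ k ≤ n, x * p k = p k * x * p k := Set.forall_mem_image
  have hdiag (x : A) : ∑ j ∈ Icc 1 n, (p j - p (j - 1)) * x * (p j - p (j - 1)) =
      blockDiag ℂ (fun j : Icc 1 n => p j - p (j - 1)) x := by
    rw [blockDiag_apply, sum_coe_sort (Icc 1 n) fun j => (p j - p (j - 1)) * x * (p j - p (j - 1))]
  rw [hS, hdiag, hdiag, aeval_blockDiag (completeOrthogonalIdempotents_sub_of_chain hchain hp0 hpn)
    B (fun x hx y hy j => sub_mul_mul_sub_of_chain hchain (mem_Icc.mp j.2).2 (mem_B.mp hx)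
      (mem_B.mp hy)) (mem_B.mpr hTp)]
end

section
/- Let H be a complex Hilbert space, let N and Q be bounded linear operators on H with NQ = QN, and set T = N + Q. Let R > max(‖T‖, ‖N‖) and let h : ℂ → ℂ be differentiable on a neighborhood of the closed disc of radius R centered at 0. Then the operators h(T) := (2πi)⁻¹ ∮_{|λ|=R} h(λ)(λ·I − T)⁻¹ dλ and h(N) := (2πi)⁻¹ ∮_{|λ|=R} h(λ)(λ·I − N)⁻¹ dλ (circle contour integrals of the operator-valued resolvents) satisfy h(T) − h(N) = A·Q = Q·A, where A = (2πi)⁻¹ ∮_{|λ|=R} h(λ)(λ·I − T)⁻¹(λ·I − N)⁻¹ dλ. -/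
/-!
By the second resolvent identity, `(λ - T)⁻¹ - (λ - N)⁻¹ = (λ - T)⁻¹ Q (λ - N)⁻¹` for every `λ`
on the circle, and `Q` commutes with both resolvents because it commutes with `N` and `T`.
Hence the integrands of `h(T) - h(N)` and of `A Q` agree pointwise, and `Q` commutes with the
integrand of `A`; right and left multiplication by `Q` are continuous linear maps, so they pass
through the contour integral.
-/

open Metric spectrum

theorem Commute.ringInverse_right {M₀ : Type*} [MonoidWithZero M₀] {a b : M₀}
    (h : Commute a b) : Commute a (Ring.inverse b) := by
  by_cases hb : IsUnit b
  · rw [← hb.unit_spec] at h ⊢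
    rw [Ring.inverse_unit]
    exact h.units_inv_right
  · rw [Ring.inverse_non_unit _ hb]
    exact Commute.zero_right a

section Algebra

variable {R A : Type*} [CommSemiring R] [Ring A] [Algebra R A]

theorem Ring.inverse_smul_one_sub (a : A) (r : R) :
    Ring.inverse (r • (1 : A) - a) = resolvent a r := by
  rw [resolvent, Algebra.algebraMap_eq_smul_one]

theorem Commute.resolvent_right {a b : A} (h : Commute a b) (r : R) :
    Commute a (resolvent b r) :=
  ((Algebra.commute_algebraMap_right r a).sub_right h).ringInverse_right

theorem resolvent_add_sub_resolvent {b q : A} {r : R} (hq : Commute q b)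
    (hbq : r ∈ resolventSet R (b + q)) (hb : r ∈ resolventSet R b) :
    resolvent (b + q) r - resolvent b r = resolvent (b + q) r * resolvent b r * q := by
  rw [resolvent_sub_resolvent hbq hb, add_sub_cancel_left, mul_assoc, mul_assoc,
    (hq.resolvent_right r).eq]

end Algebra

theorem continuousOn_resolvent {𝕜 A : Type*} [NontriviallyNormedField 𝕜] [NormedRing A]
    [NormedAlgebra 𝕜 A] [CompleteSpace A] (a : A) :
    ContinuousOn (resolvent a) (resolventSet 𝕜 a) :=
  HasDerivAt.continuousOn fun _ hk ↦ hasDerivAt_resolvent_const_left hk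

theorem ContinuousLinearMap.circleIntegral_comp_comm {E F : Type*} [NormedAddCommGroup E]
    [NormedSpace ℂ E] [CompleteSpace E] [NormedAddCommGroup F] [NormedSpace ℂ F]
    [CompleteSpace F] (L : E →L[ℂ] F) {f : ℂ → E} {c : ℂ} {R : ℝ}
    (hf : CircleIntegrable f c R) :
    (∮ z in C(c, R), L (f z)) = L (∮ z in C(c, R), f z) := by
  simp only [circleIntegral, ← L.intervalIntegral_comp_comm hf.out, L.map_smul]

section BanachAlgebra

variable {A : Type*} [NormedRing A] [NormedAlgebra ℂ A] [CompleteSpace A]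
  {f : ℂ → A} {c : ℂ} {R : ℝ}

theorem circleIntegral.integral_mul_const_of_circleIntegrable (hf : CircleIntegrable f c R)
    (a : A) : (∮ z in C(c, R), f z * a) = (∮ z in C(c, R), f z) * a :=
  ((ContinuousLinearMap.mul ℂ A).flip a).circleIntegral_comp_comm hf

theorem circleIntegral.integral_const_mul_of_circleIntegrable (hf : CircleIntegrable f c R)
    (a : A) : (∮ z in C(c, R), a * f z) = a * ∮ z in C(c, R), f z :=
  (ContinuousLinearMap.mul ℂ A a).circleIntegral_comp_comm hf

theorem Commute.circleIntegral_right {a : A} (h : ∀ z, Commute a (f z)) :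
    Commute a (∮ z in C(c, R), f z) := by
  by_cases hf : CircleIntegrable f c R
  · rw [Commute, SemiconjBy, ← circleIntegral.integral_mul_const_of_circleIntegrable hf,
      ← circleIntegral.integral_const_mul_of_circleIntegrable hf]
    simp only [(h _).eq]
  · rw [circleIntegral.integral_undef hf]
    exact Commute.zero_right a

theorem circleIntegral_smul_resolvent_add_sub {b q : A} (hq : Commute q b) {h : ℂ → ℂ}
    (hh : ContinuousOn h (sphere c R)) (hR : 0 ≤ R)
    (hbq : sphere c R ⊆ resolventSet ℂ (b + q)) (hb : sphere c R ⊆ resolventSet ℂ b) :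
    (∮ z in C(c, R), h z • resolvent (b + q) z) - (∮ z in C(c, R), h z • resolvent b z) =
      (∮ z in C(c, R), h z • (resolvent (b + q) z * resolvent b z)) * q := by
  have hint : ∀ a : A, sphere c R ⊆ resolventSet ℂ a →
      CircleIntegrable (fun z ↦ h z • resolvent a z) c R := fun a ha ↦
    (hh.smul ((continuousOn_resolvent a).mono ha)).circleIntegrable hR
  have hprod : CircleIntegrable (fun z ↦ h z • (resolvent (b + q) z * resolvent b z)) c R :=
    (hh.smul (((continuousOn_resolvent _).mono hbq).mul
      ((continuousOn_resolvent b).mono hb))).circleIntegrable hR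
  rw [← circleIntegral.integral_sub (hint _ hbq) (hint b hb),
    ← circleIntegral.integral_mul_const_of_circleIntegrable hprod]
  refine circleIntegral.integral_congr hR fun z hz ↦ ?_
  simp only [← smul_sub, smul_mul_assoc, resolvent_add_sub_resolvent hq (hbq hz) (hb hz)]

end BanachAlgebra

theorem ContinuousLinearMap.sphere_subset_resolventSet {E : Type*} [NormedAddCommGroup E]
    [NormedSpace ℂ E] [CompleteSpace E] {a : E →L[ℂ] E} {R : ℝ} (ha : ‖a‖ < R) :
    sphere (0 : ℂ) R ⊆ resolventSet ℂ a := fun z hz ↦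
  mem_resolventSet_of_norm_lt_mul <| by
    rw [mem_sphere_zero_iff_norm.1 hz, one_def]
    exact (mul_le_of_le_one_right (norm_nonneg a) norm_id_le).trans_lt ha

/-- Let `N, Q` be bounded operators on a complex Hilbert space with `NQ = QN`, `T = N + Q`,
`R > max(‖T‖, ‖N‖)`, and `h` holomorphic on a neighborhood of the closed disc of radius `R`.
With `h(T)`, `h(N)` and `A` defined by the contour integrals of the resolvents over the
circle `|λ| = R`, one has `h(T) - h(N) = A·Q = Q·A`. -/
theorem stmt_16 {H : Type*} [NormedAddCommGroup H] [InnerProductSpace ℂ H] [CompleteSpace H]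
    (N Q : H →L[ℂ] H) (hNQ : N * Q = Q * N) (T : H →L[ℂ] H) (hT : T = N + Q)
    (R : ℝ) (hR : max ‖T‖ ‖N‖ < R) (h : ℂ → ℂ)
    (hh : ∃ s : Set ℂ, IsOpen s ∧ Metric.closedBall (0 : ℂ) R ⊆ s ∧ DifferentiableOn ℂ h s)
    (hTop hNop A : H →L[ℂ] H)
    (hhT : hTop = (2 * (Real.pi : ℂ) * Complex.I)⁻¹ •
      ∮ z in C(0, R), h z • Ring.inverse (z • (1 : H →L[ℂ] H) - T))
    (hhN : hNop = (2 * (Real.pi : ℂ) * Complex.I)⁻¹ •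
      ∮ z in C(0, R), h z • Ring.inverse (z • (1 : H →L[ℂ] H) - N))
    (hA : A = (2 * (Real.pi : ℂ) * Complex.I)⁻¹ •
      ∮ z in C(0, R), h z •
        (Ring.inverse (z • (1 : H →L[ℂ] H) - T) * Ring.inverse (z • (1 : H →L[ℂ] H) - N))) :
    hTop - hNop = A * Q ∧ A * Q = Q * A := by
  obtain ⟨hTR, hNR⟩ := max_lt_iff.1 hR
  obtain ⟨s, -, hs, hhs⟩ := hh
  have hcont : ContinuousOn h (sphere 0 R) :=
    hhs.continuousOn.mono (sphere_subset_closedBall.trans hs)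
  have hQN : Commute Q N := hNQ.symm
  subst hT hhT hhN hA
  simp only [Ring.inverse_smul_one_sub]
  constructor
  · rw [← smul_sub, circleIntegral_smul_resolvent_add_sub hQN hcont ((norm_nonneg _).trans hNR.le)
      (ContinuousLinearMap.sphere_subset_resolventSet hTR)
      (ContinuousLinearMap.sphere_subset_resolventSet hNR), smul_mul_assoc]
  · rw [smul_mul_assoc, mul_smul_comm, ← (Commute.circleIntegral_right fun z ↦
      (((hQN.add_right (Commute.refl Q)).resolvent_right z).mul_right
        (hQN.resolvent_right z)).smul_right (h z)).eq]
end
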